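/- The standard curvature term acts on the tensor square representation by: for every algebraic curvature tensor R on T, every orthonormal basis E₁, …, E_m of T, and all X, Y, U, V ∈ T, writing A_{μν} := E_μ∧E_ν, R_{μν} := R_{E_μ,E_ν}, and Sec := Φ⁺R, one has (1/4)·Σ_{μ,ν=1}^m [ g(A_{μν}(R_{μν}X), U)·g(Y,V) + g(R_{μν}X, U)·g(A_{μν}Y, V) + g(A_{μν}X, U)·g(R_{μν}Y, V) + g(X,U)·g(A_{μν}(R_{μν}Y), V) ] = (1/2)·Ric(X,U)·g(Y,V) + (1/2)·g(X,U)·Ric(Y,V) − (1/6)·Sec(X,Y;U,V) + (1/6)·Sec(X,V;Y,U). -/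

import Mathlib

open scoped BigOperators

variable {T : Type*} [NormedAddCommGroup T] [InnerProductSpace ℝ T] [FiniteDimensional ℝ T]

/-- A map `T → T → T → T → ℝ` that is linear in each of its four arguments. -/
def IsQuadrilinear (R : T → T → T → T → ℝ) : Prop :=
  (∀ Y U V, IsLinearMap ℝ fun X => R X Y U V) ∧
  (∀ X U V, IsLinearMap ℝ fun Y => R X Y U V) ∧
  (∀ X Y V, IsLinearMap ℝ fun U => R X Y U V) ∧
  (∀ X Y U, IsLinearMap ℝ fun V => R X Y U V)

/-- An algebraic curvature tensor on `T`. -/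
def IsAlgCurv (R : T → T → T → T → ℝ) : Prop :=
  IsQuadrilinear R ∧
  (∀ X Y U V : T, R X Y U V = -R Y X U V) ∧
  (∀ X Y U V : T, R X Y U V = -R X Y V U) ∧
  (∀ X Y Z V : T, R X Y Z V + R Y Z X V + R Z X Y V = 0)

/-- `(Φ⁺R)(X,Y;U,V) := −2·(R(X,U;Y,V) + R(X,V;Y,U))`. -/
noncomputable def PhiPlus (R : T → T → T → T → ℝ) : T → T → T → T → ℝ :=
  fun X Y U V => -2 * (R X U Y V + R X V Y U)

/-- The skew-symmetric endomorphism `(X∧Y)U := g(X,U)·Y − g(Y,U)·X`. -/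
noncomputable def wedge (X Y : T) : T → T :=
  fun U => (inner ℝ X U : ℝ) • Y - (inner ℝ Y U : ℝ) • X

/-- The Ricci tensor of `R` with respect to the orthonormal basis `E`:
`Ric(X,Y) := Σ_μ R(E_μ,X;Y,E_μ)`. -/
noncomputable def Ricci {m : ℕ} (E : OrthonormalBasis (Fin m) ℝ T)
    (R : T → T → T → T → ℝ) (X Y : T) : ℝ :=
  ∑ μ : Fin m, R (E μ) X Y (E μ)


section Helpers

lemma expand_sum {m : ℕ} (E : OrthonormalBasis (Fin m) ℝ T) (f : T → ℝ)
    (hf : IsLinearMap ℝ f) (U : T) :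
    ∑ ν : Fin m, (inner ℝ (E ν) U : ℝ) * f (E ν) = f U := by
  let F : T →ₗ[ℝ] ℝ := IsLinearMap.mk' f hf
  calc ∑ ν : Fin m, (inner ℝ (E ν) U : ℝ) * f (E ν)
      = ∑ ν : Fin m, F ((inner ℝ (E ν) U : ℝ) • E ν) := by
        refine Finset.sum_congr rfl (fun ν _ => ?_)
        simp [F, smul_eq_mul]
    _ = F (∑ ν : Fin m, (inner ℝ (E ν) U : ℝ) • E ν) := (map_sum F _ _).symm
    _ = F U := by rw [E.sum_repr' U]
    _ = f U := rfl

lemma expand_sum2 {m : ℕ} (E : OrthonormalBasis (Fin m) ℝ T) (f : T → T → ℝ)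
    (h1 : ∀ b, IsLinearMap ℝ (fun a => f a b)) (h2 : ∀ a, IsLinearMap ℝ (fun b => f a b))
    (Y V : T) :
    ∑ μ : Fin m, ∑ ν : Fin m,
      (inner ℝ (E μ) Y : ℝ) * ((inner ℝ (E ν) V : ℝ) * f (E μ) (E ν)) = f Y V := by
  have step : ∀ μ : Fin m, ∑ ν : Fin m,
      (inner ℝ (E μ) Y : ℝ) * ((inner ℝ (E ν) V : ℝ) * f (E μ) (E ν))
      = (inner ℝ (E μ) Y : ℝ) * f (E μ) V := by
    intro μ
    rw [← Finset.mul_sum, expand_sum E (fun b => f (E μ) b) (h2 (E μ)) V]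
  rw [Finset.sum_congr rfl (fun μ _ => step μ)]
  exact expand_sum E (fun a => f a V) (h1 V) Y

lemma inner_wedge (a b Z W : T) :
    (inner ℝ (wedge a b Z) W : ℝ)
      = (inner ℝ a Z : ℝ) * (inner ℝ b W : ℝ) - (inner ℝ b Z : ℝ) * (inner ℝ a W : ℝ) := by
  simp [wedge, inner_sub_left, real_inner_smul_left]

end Helpers

/-- the standard curvature term acts on the tensor square representation as
`(1/2)·Der_Ric − (1/6)·Sec(X,Y;·,·) + (1/6)·Sec(X,·;Y,·)`. -/
theorem q_acts_on_tensor_square {m : ℕ} (E : OrthonormalBasis (Fin m) ℝ T)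
    (R : T → T → T → T → ℝ) (hR : IsAlgCurv R)
    (Rop : T → T → T → T)
    (hRop : ∀ X Y U V : T, (inner ℝ (Rop X Y U) V : ℝ) = R X Y U V) :
    ∀ X Y U V : T,
      (1 / 4 : ℝ) * ∑ μ : Fin m, ∑ ν : Fin m,
          ((inner ℝ (wedge (E μ) (E ν) (Rop (E μ) (E ν) X)) U : ℝ) * (inner ℝ Y V : ℝ)
            + (inner ℝ (Rop (E μ) (E ν) X) U : ℝ) * (inner ℝ (wedge (E μ) (E ν) Y) V : ℝ)
            + (inner ℝ (wedge (E μ) (E ν) X) U : ℝ) * (inner ℝ (Rop (E μ) (E ν) Y) V : ℝ)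
            + (inner ℝ X U : ℝ) * (inner ℝ (wedge (E μ) (E ν) (Rop (E μ) (E ν) Y)) V : ℝ))
        = (1 / 2 : ℝ) * Ricci E R X U * (inner ℝ Y V : ℝ)
          + (1 / 2 : ℝ) * (inner ℝ X U : ℝ) * Ricci E R Y V
          - (1 / 6 : ℝ) * PhiPlus R X Y U V
          + (1 / 6 : ℝ) * PhiPlus R X V Y U := by
  obtain ⟨hlin, ha, hb, hbi⟩ := hR
  have hsym : ∀ a b c d : T, R a b c d = R c d a b := by
    intro a b c d
    linarith [ha a b c d,
      hb a b c d,
      ha a b d c,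
      hb a b d c,
      ha a c b d,
      hb a c b d,
      ha a c d b,
      hb a c d b,
      ha a d b c,
      hb a d b c,
      ha a d c b,
      hb a d c b,
      ha b a c d,
      hb b a c d,
      ha b a d c,
      hb b a d c,
      ha b c a d,
      hb b c a d,
      ha b c d a,
      hb b c d a,
      ha b d a c,
      hb b d a c,
      ha b d c a,
      hb b d c a,
      ha c a b d,
      hb c a b d,
      ha c a d b,
      hb c a d b,
      ha c b a d,
      hb c b a d,
      ha c b d a,
      hb c b d a,
      ha c d a b,
      hb c d a b,
      ha c d b a,
      hb c d b a,
      ha d a b c,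
      hb d a b c,
      ha d a c b,
      hb d a c b,
      ha d b a c,
      hb d b a c,
      ha d b c a,
      hb d b c a,
      ha d c a b,
      hb d c a b,
      ha d c b a,
      hb d c b a,
      hbi a b c d,
      hbi b c d a,
      hbi c d a b,
      hbi d a b c]
  have hricsym : ∀ a b : T, Ricci E R a b = Ricci E R b a := by
    intro a b
    refine Finset.sum_congr rfl (fun μ _ => ?_)
    have h1 := hsym (E μ) a b (E μ)
    have h2 := ha b (E μ) (E μ) a
    have h3 := hb (E μ) b (E μ) a
    linarith
  have hRicLinX : ∀ X : T, IsLinearMap ℝ (fun Z => Ricci E R Z X) := by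
    intro X
    constructor
    · intro x y
      simp only [Ricci]
      rw [← Finset.sum_add_distrib]
      exact Finset.sum_congr rfl (fun μ _ => (hlin.2.1 (E μ) X (E μ)).map_add x y)
    · intro c x
      simp only [Ricci, smul_eq_mul]
      rw [Finset.mul_sum]
      refine Finset.sum_congr rfl (fun μ _ => ?_)
      simpa [smul_eq_mul] using (hlin.2.1 (E μ) X (E μ)).map_smul c x
  intro X Y U V
  have eOne : ∀ Z W : T, ∑ μ : Fin m, ∑ ν : Fin m,
      R (E μ) (E ν) Z (E μ) * (inner ℝ (E ν) W : ℝ) = Ricci E R Z W := by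
    intro Z W
    rw [Finset.sum_comm]
    have step : ∀ ν : Fin m, ∑ μ : Fin m, R (E μ) (E ν) Z (E μ) * (inner ℝ (E ν) W : ℝ)
        = (inner ℝ (E ν) W : ℝ) * Ricci E R (E ν) Z := by
      intro ν
      rw [show Ricci E R (E ν) Z = ∑ μ : Fin m, R (E μ) (E ν) Z (E μ) from rfl, Finset.mul_sum]
      exact Finset.sum_congr rfl (fun μ _ => mul_comm _ _)
    rw [Finset.sum_congr rfl (fun ν _ => step ν),
      expand_sum E (fun a => Ricci E R a Z) (hRicLinX Z) W, hricsym W Z]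
  have eTwo : ∀ Z W : T, ∑ μ : Fin m, ∑ ν : Fin m,
      R (E μ) (E ν) Z (E ν) * (inner ℝ (E μ) W : ℝ) = -Ricci E R Z W := by
    intro Z W
    have step : ∀ μ : Fin m, ∑ ν : Fin m, R (E μ) (E ν) Z (E ν) * (inner ℝ (E μ) W : ℝ)
        = -((inner ℝ (E μ) W : ℝ) * Ricci E R (E μ) Z) := by
      intro μ
      rw [show Ricci E R (E μ) Z = ∑ ν : Fin m, R (E ν) (E μ) Z (E ν) from rfl, Finset.mul_sum,
        ← Finset.sum_neg_distrib]
      refine Finset.sum_congr rfl (fun ν _ => ?_)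
      rw [ha (E μ) (E ν) Z (E ν)]; ring
    rw [Finset.sum_congr rfl (fun μ _ => step μ), Finset.sum_neg_distrib,
      expand_sum E (fun a => Ricci E R a Z) (hRicLinX Z) W, hricsym W Z]
  have pullc : ∀ (f : Fin m → Fin m → ℝ) (c : ℝ),
      ∑ μ : Fin m, ∑ ν : Fin m, f μ ν * c = (∑ μ : Fin m, ∑ ν : Fin m, f μ ν) * c := by
    intro f c
    rw [Finset.sum_mul]
    exact Finset.sum_congr rfl (fun μ _ => (Finset.sum_mul _ _ _).symm)
  have e1 : ∑ μ : Fin m, ∑ ν : Fin m,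
      R (E μ) (E ν) X (E μ) * (inner ℝ (E ν) U : ℝ) * (inner ℝ Y V : ℝ)
      = Ricci E R X U * (inner ℝ Y V : ℝ) := by
    rw [pullc (fun μ ν => R (E μ) (E ν) X (E μ) * (inner ℝ (E ν) U : ℝ)) ((inner ℝ Y V : ℝ)),
      eOne X U]
  have e2 : ∑ μ : Fin m, ∑ ν : Fin m,
      R (E μ) (E ν) X (E ν) * (inner ℝ (E μ) U : ℝ) * (inner ℝ Y V : ℝ)
      = -Ricci E R X U * (inner ℝ Y V : ℝ) := by
    rw [pullc (fun μ ν => R (E μ) (E ν) X (E ν) * (inner ℝ (E μ) U : ℝ)) ((inner ℝ Y V : ℝ)),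
      eTwo X U]
  have e7 : ∑ μ : Fin m, ∑ ν : Fin m,
      R (E μ) (E ν) Y (E μ) * (inner ℝ (E ν) V : ℝ) * (inner ℝ X U : ℝ)
      = Ricci E R Y V * (inner ℝ X U : ℝ) := by
    rw [pullc (fun μ ν => R (E μ) (E ν) Y (E μ) * (inner ℝ (E ν) V : ℝ)) ((inner ℝ X U : ℝ)),
      eOne Y V]
  have e8 : ∑ μ : Fin m, ∑ ν : Fin m,
      R (E μ) (E ν) Y (E ν) * (inner ℝ (E μ) V : ℝ) * (inner ℝ X U : ℝ)
      = -Ricci E R Y V * (inner ℝ X U : ℝ) := by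
    rw [pullc (fun μ ν => R (E μ) (E ν) Y (E ν) * (inner ℝ (E μ) V : ℝ)) ((inner ℝ X U : ℝ)),
      eTwo Y V]
  have hB : ∀ P Q W Z : T, ∑ μ : Fin m, ∑ ν : Fin m,
      (inner ℝ (E μ) W : ℝ) * ((inner ℝ (E ν) Z : ℝ) * R (E μ) (E ν) P Q) = R W Z P Q :=
    fun P Q W Z => expand_sum2 E (fun a b => R a b P Q)
      (fun b => hlin.1 b P Q) (fun a => hlin.2.1 a P Q) W Z
  have step : ∀ μ ν : Fin m,
      ((inner ℝ (wedge (E μ) (E ν) (Rop (E μ) (E ν) X)) U : ℝ) * (inner ℝ Y V : ℝ)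
        + (inner ℝ (Rop (E μ) (E ν) X) U : ℝ) * (inner ℝ (wedge (E μ) (E ν) Y) V : ℝ)
        + (inner ℝ (wedge (E μ) (E ν) X) U : ℝ) * (inner ℝ (Rop (E μ) (E ν) Y) V : ℝ)
        + (inner ℝ X U : ℝ) * (inner ℝ (wedge (E μ) (E ν) (Rop (E μ) (E ν) Y)) V : ℝ))
      = (R (E μ) (E ν) X (E μ) * (inner ℝ (E ν) U : ℝ) * (inner ℝ Y V : ℝ)
          - R (E μ) (E ν) X (E ν) * (inner ℝ (E μ) U : ℝ) * (inner ℝ Y V : ℝ))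
        + ((inner ℝ (E μ) Y : ℝ) * ((inner ℝ (E ν) V : ℝ) * R (E μ) (E ν) X U)
          - (inner ℝ (E μ) V : ℝ) * ((inner ℝ (E ν) Y : ℝ) * R (E μ) (E ν) X U))
        + ((inner ℝ (E μ) X : ℝ) * ((inner ℝ (E ν) U : ℝ) * R (E μ) (E ν) Y V)
          - (inner ℝ (E μ) U : ℝ) * ((inner ℝ (E ν) X : ℝ) * R (E μ) (E ν) Y V))
        + (R (E μ) (E ν) Y (E μ) * (inner ℝ (E ν) V : ℝ) * (inner ℝ X U : ℝ)
          - R (E μ) (E ν) Y (E ν) * (inner ℝ (E μ) V : ℝ) * (inner ℝ X U : ℝ)) := by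
    intro μ ν
    rw [inner_wedge (E μ) (E ν) (Rop (E μ) (E ν) X) U,
      inner_wedge (E μ) (E ν) Y V,
      inner_wedge (E μ) (E ν) X U,
      inner_wedge (E μ) (E ν) (Rop (E μ) (E ν) Y) V,
      real_inner_comm (Rop (E μ) (E ν) X) (E μ),
      real_inner_comm (Rop (E μ) (E ν) X) (E ν),
      real_inner_comm (Rop (E μ) (E ν) Y) (E μ),
      real_inner_comm (Rop (E μ) (E ν) Y) (E ν),
      hRop, hRop, hRop, hRop, hRop, hRop]
    ring
  rw [Finset.sum_congr rfl (fun μ _ => Finset.sum_congr rfl (fun ν _ => step μ ν))]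
  simp only [Finset.sum_add_distrib, Finset.sum_sub_distrib]
  rw [e1, e2, e7, e8, hB X U Y V, hB X U V Y, hB Y V X U, hB Y V U X]
  simp only [PhiPlus]
  linarith [hsym Y V X U, ha V Y X U, ha U X Y V, hsym X V Y U,
    hbi X Y U V, hb X Y V U, hb X U V Y]
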